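/- The partial compositions ▼_a on finite posets satisfy parallel associativity: for finite posets A, B, C with distinct elements a, a' ∈ A, (A ▼_a B) ▼_{a'} C = (A ▼_{a'} C) ▼_a B. -/

import Mathlib

/-- The relation of `A ▼_a B` on `(A \ {a}) ⊔ B`; in the last case `x` is
required to be a minimal element of `B`. -/
def vcomp {α β : Type*} (lA : α → α → Prop) (lB : β → β → Prop) (a : α) :
    ({x : α // x ≠ a} ⊕ β) → ({x : α // x ≠ a} ⊕ β) → Prop
  | .inl x, .inl y => lA x.1 y.1
  | .inr x, .inr y => lB x y
  | .inl x, .inr _ => lA x.1 a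
  | .inr x, .inl y => (∀ z, lB z x → z = x) ∧ lA a y.1

/-- The canonical identification of the underlying set of `(A ▼_a B) ▼_{a'} C`
with that of `(A ▼_{a'} C) ▼_a B`. -/
def parMap {α β γ : Type*} (a a' : α) (hne : a ≠ a') :
    ({x : {x : α // x ≠ a} ⊕ β // x ≠ Sum.inl ⟨a', hne.symm⟩} ⊕ γ) →
      ({x : {x : α // x ≠ a'} ⊕ γ // x ≠ Sum.inl ⟨a, hne⟩} ⊕ β)
  | .inl ⟨.inl x, h⟩ =>
      .inl ⟨.inl ⟨x.1, fun hx => h (congrArg Sum.inl (Subtype.ext hx))⟩,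
        fun hEq => x.2 (congrArg Subtype.val (Sum.inl.inj hEq))⟩
  | .inl ⟨.inr y, _⟩ => .inr y
  | .inr c => .inl ⟨.inr c, fun h => nomatch h⟩

theorem stmt8_general {α β γ : Type*}
    [PartialOrder α] [PartialOrder β] [PartialOrder γ] (a a' : α) (hne : a ≠ a') :
    ∀ u v : ({x : {x : α // x ≠ a} ⊕ β // x ≠ Sum.inl ⟨a', hne.symm⟩} ⊕ γ),
      vcomp (vcomp ((· ≤ ·) : α → α → Prop) ((· ≤ ·) : β → β → Prop) a)
        ((· ≤ ·) : γ → γ → Prop) (Sum.inl ⟨a', hne.symm⟩) u v ↔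
      vcomp (vcomp ((· ≤ ·) : α → α → Prop) ((· ≤ ·) : γ → γ → Prop) a')
        ((· ≤ ·) : β → β → Prop) (Sum.inl ⟨a, hne⟩)
        (parMap a a' hne u) (parMap a a' hne v) := by
  rintro (⟨_ | _, _⟩ | _) (⟨_ | _, _⟩ | _) <;> exact Iff.rfl

/-- Parallel associativity for `▼`: `(A ▼_a B) ▼_{a'} C = (A ▼_{a'} C) ▼_a B`. -/
theorem stmt8 {α β γ : Type*} [Fintype α] [Fintype β] [Fintype γ]
    [PartialOrder α] [PartialOrder β] [PartialOrder γ] (a a' : α) (hne : a ≠ a') :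
    ∀ u v : ({x : {x : α // x ≠ a} ⊕ β // x ≠ Sum.inl ⟨a', hne.symm⟩} ⊕ γ),
      vcomp (vcomp ((· ≤ ·) : α → α → Prop) ((· ≤ ·) : β → β → Prop) a)
        ((· ≤ ·) : γ → γ → Prop) (Sum.inl ⟨a', hne.symm⟩) u v ↔
      vcomp (vcomp ((· ≤ ·) : α → α → Prop) ((· ≤ ·) : γ → γ → Prop) a')
        ((· ≤ ·) : β → β → Prop) (Sum.inl ⟨a, hne⟩)
        (parMap a a' hne u) (parMap a a' hne v) :=
  stmt8_general a a' hne
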